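/- Any optimal solution x* to the stochastic assignment problem (minimizing the two-queue expected waiting time f(x, α) over x ∈ [0,1]ⁿ with stability constraints, for fixed α ∈ (0,1)) has at most one fractional component: the set {i : 0 < x*ᵢ < 1} is empty or a singleton, provided the service rates μ₁, …, μₙ are pairwise distinct. -/

import Mathlib

/-!
Suppose two types `i ≠ j` were both split between the queues. Shifting traffic of type `i` into
queue 1 at rate `μᵢ/λᵢ` and traffic of type `j` out of it at rate `μⱼ/λⱼ` leaves both workloads
`B_x`, `B_y` unchanged, so along this line `f` is a quadratic in the step `t` whose leading
coefficient is `(1/μᵢ - 1/μⱼ)(μᵢ - μⱼ)(1/D_x + 1/D_y)/Σλ`, where `D_x = α(α - B_x)` and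
`D_y = (1 - α)(1 - α - B_y)` are positive by feasibility. For `μᵢ ≠ μⱼ` this is negative, so
`f` is strictly concave along the line and cannot have a local minimum at the interior point `x`.
-/

open Filter Topology

theorem IsLocalMin.exists_two_mul_le_add_neg {φ : ℝ → ℝ} (h : IsLocalMin φ 0) :
    ∃ t ≠ 0, 2 * φ 0 ≤ φ t + φ (-t) := by
  have h_neg : ∀ᶠ t in 𝓝 (0 : ℝ), φ 0 ≤ φ (-t) :=
    (continuous_neg.tendsto' (0 : ℝ) 0 neg_zero).eventually h
  obtain ⟨t, ⟨hpos, hneg⟩, ht⟩ :=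
    (((h.and h_neg).filter_mono (nhdsWithin_le_nhds (s := {0}ᶜ))).and
      self_mem_nhdsWithin).exists
  exact ⟨t, ht, by linarith⟩

theorem inv_sub_inv_mul_sub_neg {a b : ℝ} (ha : 0 < a) (hb : 0 < b) (hab : a ≠ b) :
    (a⁻¹ - b⁻¹) * (a - b) < 0 := by
  have hsq : 0 < (a - b) ^ 2 := by positivity [sub_ne_zero.mpr hab]
  rw [inv_sub_inv ha.ne' hb.ne', div_mul_eq_mul_div]
  exact div_neg_of_neg_of_pos (by nlinarith) (by positivity)

theorem sq_sub_mul_pos {s B : ℝ} (hB : 0 ≤ B) (hBs : B < s) : 0 < s ^ 2 - s * B := by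
  nlinarith

theorem one_sub_add_smul {ι : Type*} (x d : ι → ℝ) (t : ℝ) :
    1 - (x + t • d) = (1 - x) + (-t) • d := by
  rw [neg_smul, ← sub_eq_add_neg, sub_sub]

section StochasticAssignment

variable {ι : Type*} [Fintype ι] (lam mu : ι → ℝ)

noncomputable def queueCost (s : ℝ) (y : ι → ℝ) : ℝ :=
  (∑ k, lam k * y k / mu k ^ 2) * (∑ k, lam k * y k) / (s ^ 2 - s * ∑ k, lam k * y k / mu k)

noncomputable def waitingCost (α : ℝ) (y : ι → ℝ) : ℝ :=
  (queueCost lam mu α y + queueCost lam mu (1 - α) (1 - y)) / ∑ k, lam k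

def feasibleSet (α : ℝ) : Set (ι → ℝ) :=
  {y | (∀ k, y k ∈ Set.Icc (0 : ℝ) 1) ∧ ∑ k, lam k * y k / mu k < α ∧
    ∑ k, lam k * (1 - y) k / mu k < 1 - α}

variable {lam mu}

theorem sum_mul_add_smul_div (g x d : ι → ℝ) (t : ℝ) :
    ∑ k, lam k * (x + t • d) k / g k = ∑ k, lam k * x k / g k + t * ∑ k, lam k * d k / g k := by
  rw [Finset.mul_sum, ← Finset.sum_add_distrib]
  refine Finset.sum_congr rfl fun k _ => ?_
  simp only [Pi.add_apply, Pi.smul_apply, smul_eq_mul]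
  ring

theorem sum_mul_add_smul (x d : ι → ℝ) (t : ℝ) :
    ∑ k, lam k * (x + t • d) k = ∑ k, lam k * x k + t * ∑ k, lam k * d k := by
  simpa using sum_mul_add_smul_div (lam := lam) 1 x d t

theorem queueCost_add_smul_add_queueCost_add_neg_smul (s : ℝ) (x d : ι → ℝ)
    (hd : ∑ k, lam k * d k / mu k = 0) (t : ℝ) :
    queueCost lam mu s (x + t • d) + queueCost lam mu s (x + (-t) • d) =
      2 * queueCost lam mu s x + 2 * t ^ 2 * ((∑ k, lam k * d k / mu k ^ 2) * ∑ k, lam k * d k) /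
        (s ^ 2 - s * ∑ k, lam k * x k / mu k) := by
  simp only [queueCost, sum_mul_add_smul_div, sum_mul_add_smul, hd]
  ring

theorem waitingCost_add_smul_add_waitingCost_add_neg_smul (α : ℝ) (x d : ι → ℝ)
    (hd : ∑ k, lam k * d k / mu k = 0) (t : ℝ) :
    waitingCost lam mu α (x + t • d) + waitingCost lam mu α (x + (-t) • d) =
      2 * waitingCost lam mu α x + 2 * t ^ 2 * ((∑ k, lam k * d k / mu k ^ 2) * ∑ k, lam k * d k) *
        (1 / (α ^ 2 - α * ∑ k, lam k * x k / mu k) +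
          1 / ((1 - α) ^ 2 - (1 - α) * ∑ k, lam k * (1 - x) k / mu k)) / ∑ k, lam k := by
  have h₁ := queueCost_add_smul_add_queueCost_add_neg_smul α x d hd t
  have h₂ := queueCost_add_smul_add_queueCost_add_neg_smul (1 - α) (1 - x) d hd (-t)
  simp only [waitingCost, one_sub_add_smul, neg_neg] at h₂ ⊢
  linear_combination (h₁ + h₂) / ∑ k, lam k

theorem waitingCost_add_smul_add_waitingCost_add_neg_smul_lt [Nonempty ι] {α : ℝ}
    (hlam : ∀ k, 0 < lam k) (hmu : ∀ k, 0 < mu k) {x d : ι → ℝ} (hx : x ∈ feasibleSet lam mu α)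
    (hd : ∑ k, lam k * d k / mu k = 0)
    (hconc : (∑ k, lam k * d k / mu k ^ 2) * ∑ k, lam k * d k < 0) {t : ℝ} (ht : t ≠ 0) :
    waitingCost lam mu α (x + t • d) + waitingCost lam mu α (x + (-t) • d) <
      2 * waitingCost lam mu α x := by
  obtain ⟨hbox, hBx, hBy⟩ := hx
  have hDx := sq_sub_mul_pos (Finset.sum_nonneg fun k _ =>
    div_nonneg (mul_nonneg (hlam k).le (hbox k).1) (hmu k).le) hBx
  have hDy := sq_sub_mul_pos (Finset.sum_nonneg fun k _ =>
    div_nonneg (mul_nonneg (hlam k).le (sub_nonneg.mpr (hbox k).2)) (hmu k).le) hBy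
  have hL : 0 < ∑ k, lam k := Finset.sum_pos (fun k _ => hlam k) Finset.univ_nonempty
  rw [waitingCost_add_smul_add_waitingCost_add_neg_smul α x d hd t, add_lt_iff_neg_left]
  refine div_neg_of_neg_of_pos (mul_neg_of_neg_of_pos ?_ (by positivity)) hL
  exact mul_neg_of_pos_of_neg (by positivity) hconc

theorem eventually_add_smul_mem_feasibleSet {α : ℝ} {x d : ι → ℝ}
    (hx : x ∈ feasibleSet lam mu α) (hd : ∑ k, lam k * d k / mu k = 0)
    (hsupp : ∀ k, d k ≠ 0 → x k ∈ Set.Ioo 0 1) :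
    ∀ᶠ t in 𝓝 (0 : ℝ), x + t • d ∈ feasibleSet lam mu α := by
  obtain ⟨hbox, hBx, hBy⟩ := hx
  have hbox_near : ∀ k, ∀ᶠ t in 𝓝 (0 : ℝ), (x + t • d) k ∈ Set.Icc (0 : ℝ) 1 := by
    intro k
    by_cases hdk : d k = 0
    · simpa [hdk] using hbox k
    have hline : Tendsto (fun t : ℝ => x k + t * d k) (𝓝 0) (𝓝 (x k)) := by
      simpa using (tendsto_const_nhds (x := x k)).add
        ((tendsto_id (x := 𝓝 (0 : ℝ))).mul_const (d k))
    exact (hline.eventually_mem (isOpen_Ioo.mem_nhds (hsupp k hdk))).mono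
      fun t ht => by simpa using Set.Ioo_subset_Icc_self ht
  refine (eventually_all.2 hbox_near).mono fun t ht => ⟨ht, ?_, ?_⟩
  · rwa [sum_mul_add_smul_div, hd, mul_zero, add_zero]
  · rwa [one_sub_add_smul, sum_mul_add_smul_div, hd, mul_zero, add_zero]

end StochasticAssignment

section TransferDirection

variable {ι : Type*} [DecidableEq ι] {lam mu : ι → ℝ}

variable (lam mu) in
noncomputable def transferDir (i j : ι) : ι → ℝ :=
  Pi.single i (mu i / lam i) - Pi.single j (mu j / lam j)

theorem transferDir_apply_of_ne {i j k : ι} (hi : k ≠ i) (hj : k ≠ j) :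
    transferDir lam mu i j k = 0 := by
  simp [transferDir, hi, hj]

theorem sum_mul_transferDir_div [Fintype ι] {i j : ι} (hi : lam i ≠ 0) (hj : lam j ≠ 0)
    (g : ι → ℝ) :
    ∑ k, lam k * transferDir lam mu i j k / g k = mu i / g i - mu j / g j := by
  simp [transferDir, Pi.single_apply, mul_sub, sub_div, Finset.sum_sub_distrib, ite_div,
    mul_div_cancel₀ _ hi, mul_div_cancel₀ _ hj]

theorem sum_mul_transferDir [Fintype ι] {i j : ι} (hi : lam i ≠ 0) (hj : lam j ≠ 0) :
    ∑ k, lam k * transferDir lam mu i j k = mu i - mu j := by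
  simpa using sum_mul_transferDir_div (mu := mu) hi hj 1

end TransferDirection

theorem stmt_12_general (n : ℕ) (lam mu : Fin n → ℝ) (hlam : ∀ k, 0 < lam k)
    (hmu : ∀ k, 0 < mu k) (hdist : Function.Injective mu)
    (α : ℝ)
    (f : (Fin n → ℝ) → ℝ)
    (hf : ∀ y : Fin n → ℝ, f y =
      ((∑ k, lam k * y k / (mu k) ^ 2) * (∑ k, lam k * y k) /
          (α ^ 2 - α * ∑ k, lam k * y k / mu k) +
        (∑ k, lam k * (1 - y k) / (mu k) ^ 2) * (∑ k, lam k * (1 - y k)) /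
          ((1 - α) ^ 2 - (1 - α) * ∑ k, lam k * (1 - y k) / mu k)) /
        (∑ k, lam k))
    (S : Set (Fin n → ℝ))
    (hS : S = {y : Fin n → ℝ | (∀ k, y k ∈ Set.Icc (0 : ℝ) 1) ∧
      ∑ k, lam k * y k / mu k < α ∧
      ∑ k, lam k * (1 - y k) / mu k < 1 - α})
    (xs : Fin n → ℝ) (hxs : xs ∈ S) (hopt : ∀ y ∈ S, f xs ≤ f y) :
    {i : Fin n | 0 < xs i ∧ xs i < 1}.Subsingleton := by
  obtain rfl : S = feasibleSet lam mu α := hS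
  obtain rfl : f = waitingCost lam mu α := funext hf
  intro i hi j hj
  by_contra hij
  have : Nonempty (Fin n) := ⟨i⟩
  have hli := (hlam i).ne'
  have hlj := (hlam j).ne'
  set d := transferDir lam mu i j
  have hd : ∑ k, lam k * d k / mu k = 0 := by
    rw [sum_mul_transferDir_div hli hlj, div_self (hmu i).ne', div_self (hmu j).ne', sub_self]
  have hconc : (∑ k, lam k * d k / mu k ^ 2) * ∑ k, lam k * d k < 0 := by
    rw [sum_mul_transferDir_div hli hlj, sum_mul_transferDir hli hlj]
    simpa [sq, div_mul_cancel_left₀ (hmu i).ne', div_mul_cancel_left₀ (hmu j).ne']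
      using inv_sub_inv_mul_sub_neg (hmu i) (hmu j) (hdist.ne hij)
  have hsupp : ∀ k, d k ≠ 0 → xs k ∈ Set.Ioo 0 1 := by
    intro k hk
    rcases eq_or_ne k i with rfl | hki
    · exact hi
    rcases eq_or_ne k j with rfl | hkj
    · exact hj
    exact absurd (transferDir_apply_of_ne hki hkj) hk
  have hmin : IsLocalMin (fun t : ℝ => waitingCost lam mu α (xs + t • d)) 0 :=
    (eventually_add_smul_mem_feasibleSet hxs hd hsupp).mono fun t ht => by
      simpa using hopt _ ht
  obtain ⟨t, ht, hle⟩ := hmin.exists_two_mul_le_add_neg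
  refine (waitingCost_add_smul_add_waitingCost_add_neg_smul_lt hlam hmu hxs hd hconc ht).not_ge ?_
  simpa using hle

/-- Any optimal solution of the stochastic assignment problem has at most one
fractional component, provided the service rates are pairwise distinct. -/
theorem stmt_12 (n : ℕ) (lam mu : Fin n → ℝ) (hlam : ∀ k, 0 < lam k)
    (hmu : ∀ k, 0 < mu k) (hdist : Function.Injective mu)
    (α : ℝ) (hα : α ∈ Set.Ioo (0 : ℝ) 1)
    (f : (Fin n → ℝ) → ℝ)
    (hf : ∀ y : Fin n → ℝ, f y =
      ((∑ k, lam k * y k / (mu k) ^ 2) * (∑ k, lam k * y k) /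
          (α ^ 2 - α * ∑ k, lam k * y k / mu k) +
        (∑ k, lam k * (1 - y k) / (mu k) ^ 2) * (∑ k, lam k * (1 - y k)) /
          ((1 - α) ^ 2 - (1 - α) * ∑ k, lam k * (1 - y k) / mu k)) /
        (∑ k, lam k))
    (S : Set (Fin n → ℝ))
    (hS : S = {y : Fin n → ℝ | (∀ k, y k ∈ Set.Icc (0 : ℝ) 1) ∧
      ∑ k, lam k * y k / mu k < α ∧
      ∑ k, lam k * (1 - y k) / mu k < 1 - α})
    (xs : Fin n → ℝ) (hxs : xs ∈ S) (hopt : ∀ y ∈ S, f xs ≤ f y) :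
    {i : Fin n | 0 < xs i ∧ xs i < 1}.Subsingleton :=
  stmt_12_general n lam mu hlam hmu hdist α f hf S hS xs hxs hopt
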